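/- Let n ≥ 1 and let v : (0,∞) × ℝⁿ → ℝ be smooth and satisfy ∂v/∂t = Δv − |∇v|² − n/(2t). Define P = 2Δv − |∇v|² − 2n/t. Then P satisfies the evolution equation ∂P/∂t = ΔP − 2⟨∇P, ∇v⟩ − 2|∇²v − (1/t)I|² − 2P/t − 2|∇v|²/t. -/

import Mathlib

open MeasureTheory Real

noncomputable section

/-- Partial derivative of `g` at `x` in the `i`-th coordinate direction. -/
def pd {n : ℕ} (i : Fin n) (g : (Fin n → ℝ) → ℝ) (x : Fin n → ℝ) : ℝ :=
  fderiv ℝ g x (Pi.single i 1)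

/-- Squared Euclidean norm of the (spatial) gradient of `g` at `x`. -/
def gradSq {n : ℕ} (g : (Fin n → ℝ) → ℝ) (x : Fin n → ℝ) : ℝ :=
  ∑ i, (pd i g x) ^ 2

/-- The (spatial) Laplacian of `g` at `x`. -/
def lap {n : ℕ} (g : (Fin n → ℝ) → ℝ) (x : Fin n → ℝ) : ℝ :=
  ∑ i, pd i (pd i g) x

/-- The `(i,j)` entry of the Hessian of `g` at `x`. -/
def hess {n : ℕ} (i j : Fin n) (g : (Fin n → ℝ) → ℝ) (x : Fin n → ℝ) : ℝ :=
  pd i (pd j g) x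

/-!
Write `V(t, x) = v t x` on `(0, ∞) × ℝⁿ`; time and space derivatives are then directional
derivatives of `V`, and they commute by the symmetry of second derivatives. Differentiating
`P = 2ΔV - |∇V|² + 4h` in time (with `h = -n/(2t)`) and substituting `∂ₜV = ΔV - |∇V|² + h`,
everything cancels against `ΔP - 2⟨∇P, ∇V⟩` except `-Δ|∇V|² + 2⟨∇ΔV, ∇V⟩ + 4∂ₜh`. Bochner's
formula in flat space turns the first two terms into `-2|∇²V|²`, and completing the square
`|∇²V - I/t|² = |∇²V|² - 2ΔV/t + n/t²` absorbs the rest.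
-/

open Set
open scoped ContDiff
open Function (uncurry)

section DirDeriv

variable {E F : Type*} [NormedAddCommGroup E] [NormedSpace ℝ E]
  [NormedAddCommGroup F] [NormedSpace ℝ F] {U : Set E} {f g : E → ℝ} {p : E}

def dirDeriv (w : E) (g : E → ℝ) (p : E) : ℝ := fderiv ℝ g p w

theorem ContDiffOn.differentiableAt_of_isOpen {φ : E → F} (hφ : ContDiffOn ℝ ∞ φ U)
    (hU : IsOpen U) (hp : p ∈ U) : DifferentiableAt ℝ φ p :=
  (hφ.contDiffAt (hU.mem_nhds hp)).differentiableAt (by simp)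

theorem ContDiffOn.dirDeriv (hg : ContDiffOn ℝ ∞ g U) (hU : IsOpen U) (w : E) :
    ContDiffOn ℝ ∞ (dirDeriv w g) U :=
  (hg.fderiv_of_isOpen hU le_rfl).clm_apply contDiffOn_const

theorem dirDeriv_congr (hU : IsOpen U) (h : EqOn f g U) (w : E) :
    EqOn (dirDeriv w f) (dirDeriv w g) U := fun p hp => by
  simp only [dirDeriv, (h.eventuallyEq_of_mem (hU.mem_nhds hp)).fderiv_eq]

theorem dirDeriv_comm (hg : ContDiffOn ℝ ∞ g U) (hU : IsOpen U) (hp : p ∈ U) (w w' : E) :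
    dirDeriv w (dirDeriv w' g) p = dirDeriv w' (dirDeriv w g) p := by
  have hsnd : ∀ u u', dirDeriv u (dirDeriv u' g) p = fderiv ℝ (fderiv ℝ g) p u u' := fun u u' => by
    have := (hg.fderiv_of_isOpen hU le_rfl).differentiableAt_of_isOpen hU hp
    show fderiv ℝ (fun q => fderiv ℝ g q u') p u = _
    simp [fderiv_clm_apply this (differentiableAt_const u')]
  rw [hsnd, hsnd]
  have h2 : (2 : WithTop ℕ∞) ≤ ∞ := WithTop.coe_le_coe.2 le_top
  exact (hg.contDiffAt (hU.mem_nhds hp)).isSymmSndFDerivAt (by simpa using h2) w w'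

theorem dirDeriv_add (hf : DifferentiableAt ℝ f p) (hg : DifferentiableAt ℝ g p) (w : E) :
    dirDeriv w (fun q => f q + g q) p = dirDeriv w f p + dirDeriv w g p := by
  simp [dirDeriv, fderiv_fun_add hf hg]

theorem dirDeriv_sub (hf : DifferentiableAt ℝ f p) (hg : DifferentiableAt ℝ g p) (w : E) :
    dirDeriv w (fun q => f q - g q) p = dirDeriv w f p - dirDeriv w g p := by
  simp [dirDeriv, fderiv_fun_sub hf hg]

theorem dirDeriv_const_mul (hf : DifferentiableAt ℝ f p) (c : ℝ) (w : E) :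
    dirDeriv w (fun q => c * f q) p = c * dirDeriv w f p := by
  simp [dirDeriv, fderiv_const_mul hf]

theorem dirDeriv_mul (hf : DifferentiableAt ℝ f p) (hg : DifferentiableAt ℝ g p) (w : E) :
    dirDeriv w (fun q => f q * g q) p = dirDeriv w f p * g p + f p * dirDeriv w g p := by
  simp only [dirDeriv, fderiv_fun_mul hf hg, add_apply, smul_apply, smul_eq_mul]
  ring

theorem dirDeriv_sum {ι : Type*} {s : Finset ι} {F : ι → E → ℝ}
    (hF : ∀ i ∈ s, DifferentiableAt ℝ (F i) p) (w : E) :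
    dirDeriv w (fun q => ∑ i ∈ s, F i q) p = ∑ i ∈ s, dirDeriv w (F i) p := by
  simp [dirDeriv, fderiv_fun_sum hF]

end DirDeriv

section Along

variable {E : Type*} [NormedAddCommGroup E] [NormedSpace ℝ E] {U : Set E} {f g : E → ℝ} {p : E}
  {ι : Type*} [Fintype ι] (e : ι → E)

def lapAlong (g : E → ℝ) (p : E) : ℝ := ∑ i, dirDeriv (e i) (dirDeriv (e i) g) p

def gradInnerAlong (f g : E → ℝ) (p : E) : ℝ := ∑ i, dirDeriv (e i) f p * dirDeriv (e i) g p

def hessSqAlong (g : E → ℝ) (p : E) : ℝ := ∑ i, ∑ j, dirDeriv (e i) (dirDeriv (e j) g) p ^ 2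

variable {e}

theorem ContDiffOn.lapAlong (hg : ContDiffOn ℝ ∞ g U) (hU : IsOpen U) :
    ContDiffOn ℝ ∞ (lapAlong e g) U :=
  ContDiffOn.sum fun _ _ => (hg.dirDeriv hU _).dirDeriv hU _

theorem ContDiffOn.gradInnerAlong (hf : ContDiffOn ℝ ∞ f U) (hg : ContDiffOn ℝ ∞ g U)
    (hU : IsOpen U) : ContDiffOn ℝ ∞ (gradInnerAlong e f g) U :=
  ContDiffOn.sum fun _ _ => (hf.dirDeriv hU _).mul (hg.dirDeriv hU _)

theorem gradInnerAlong_comm (f g : E → ℝ) : gradInnerAlong e f g = gradInnerAlong e g f := by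
  funext p
  simp only [gradInnerAlong, mul_comm]

theorem gradInnerAlong_add_left {k : E → ℝ} (hf : DifferentiableAt ℝ f p)
    (hg : DifferentiableAt ℝ g p) :
    gradInnerAlong e (fun q => f q + g q) k p
      = gradInnerAlong e f k p + gradInnerAlong e g k p := by
  simp only [gradInnerAlong, dirDeriv_add hf hg, add_mul, Finset.sum_add_distrib]

theorem gradInnerAlong_sub_left {k : E → ℝ} (hf : DifferentiableAt ℝ f p)
    (hg : DifferentiableAt ℝ g p) :
    gradInnerAlong e (fun q => f q - g q) k p
      = gradInnerAlong e f k p - gradInnerAlong e g k p := by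
  simp only [gradInnerAlong, dirDeriv_sub hf hg, sub_mul, Finset.sum_sub_distrib]

theorem gradInnerAlong_const_mul_left {k : E → ℝ} (hf : DifferentiableAt ℝ f p) (c : ℝ) :
    gradInnerAlong e (fun q => c * f q) k p = c * gradInnerAlong e f k p := by
  simp only [gradInnerAlong, dirDeriv_const_mul hf, Finset.mul_sum, mul_assoc]

variable (hU : IsOpen U) (hp : p ∈ U)
include hU hp

theorem lapAlong_add (hf : ContDiffOn ℝ ∞ f U) (hg : ContDiffOn ℝ ∞ g U) :
    lapAlong e (fun q => f q + g q) p = lapAlong e f p + lapAlong e g p := by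
  simp only [lapAlong, ← Finset.sum_add_distrib]
  refine Finset.sum_congr rfl fun i _ => ?_
  rw [dirDeriv_congr hU (fun q hq => dirDeriv_add (hf.differentiableAt_of_isOpen hU hq)
      (hg.differentiableAt_of_isOpen hU hq) (e i)) (e i) hp,
    dirDeriv_add ((hf.dirDeriv hU _).differentiableAt_of_isOpen hU hp)
      ((hg.dirDeriv hU _).differentiableAt_of_isOpen hU hp)]

theorem lapAlong_sub (hf : ContDiffOn ℝ ∞ f U) (hg : ContDiffOn ℝ ∞ g U) :
    lapAlong e (fun q => f q - g q) p = lapAlong e f p - lapAlong e g p := by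
  simp only [lapAlong, ← Finset.sum_sub_distrib]
  refine Finset.sum_congr rfl fun i _ => ?_
  rw [dirDeriv_congr hU (fun q hq => dirDeriv_sub (hf.differentiableAt_of_isOpen hU hq)
      (hg.differentiableAt_of_isOpen hU hq) (e i)) (e i) hp,
    dirDeriv_sub ((hf.dirDeriv hU _).differentiableAt_of_isOpen hU hp)
      ((hg.dirDeriv hU _).differentiableAt_of_isOpen hU hp)]

theorem lapAlong_const_mul (hf : ContDiffOn ℝ ∞ f U) (c : ℝ) :
    lapAlong e (fun q => c * f q) p = c * lapAlong e f p := by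
  simp only [lapAlong, Finset.mul_sum]
  refine Finset.sum_congr rfl fun i _ => ?_
  rw [dirDeriv_congr hU (fun q hq => dirDeriv_const_mul (hf.differentiableAt_of_isOpen hU hq)
      c (e i)) (e i) hp,
    dirDeriv_const_mul ((hf.dirDeriv hU _).differentiableAt_of_isOpen hU hp)]

theorem lapAlong_eq_zero (hf : ∀ i, EqOn (dirDeriv (e i) f) 0 U) : lapAlong e f p = 0 := by
  refine Finset.sum_eq_zero fun i _ => ?_
  rw [dirDeriv_congr hU (hf i) (e i) hp]
  simp [dirDeriv]

theorem dirDeriv_lapAlong (hg : ContDiffOn ℝ ∞ g U) (w : E) :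
    dirDeriv w (lapAlong e g) p = lapAlong e (dirDeriv w g) p := by
  refine (dirDeriv_sum (fun i _ =>
    ((hg.dirDeriv hU (e i)).dirDeriv hU (e i)).differentiableAt_of_isOpen hU hp) w).trans ?_
  refine Finset.sum_congr rfl fun i _ => ?_
  rw [dirDeriv_comm (hg.dirDeriv hU _) hU hp,
    dirDeriv_congr hU (fun q hq => dirDeriv_comm hg hU hq w (e i)) (e i) hp]

theorem dirDeriv_gradInnerAlong (hf : ContDiffOn ℝ ∞ f U) (hg : ContDiffOn ℝ ∞ g U) (w : E) :
    dirDeriv w (gradInnerAlong e f g) p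
      = gradInnerAlong e (dirDeriv w f) g p + gradInnerAlong e f (dirDeriv w g) p := by
  have hdf := fun i => (hf.dirDeriv hU (e i)).differentiableAt_of_isOpen hU hp
  have hdg := fun i => (hg.dirDeriv hU (e i)).differentiableAt_of_isOpen hU hp
  refine (dirDeriv_sum (fun i _ => (hdf i).fun_mul (hdg i)) w).trans ?_
  rw [gradInnerAlong, gradInnerAlong, ← Finset.sum_add_distrib]
  refine Finset.sum_congr rfl fun i _ => ?_
  rw [dirDeriv_mul (hdf i) (hdg i), dirDeriv_comm hf hU hp, dirDeriv_comm hg hU hp]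

theorem lapAlong_congr (hfg : EqOn f g U) : lapAlong e f p = lapAlong e g p :=
  Finset.sum_congr rfl fun i _ => dirDeriv_congr hU (dirDeriv_congr hU hfg (e i)) (e i) hp

theorem gradInnerAlong_congr_left {k : E → ℝ} (hfg : EqOn f g U) :
    gradInnerAlong e f k p = gradInnerAlong e g k p := by
  simp only [gradInnerAlong, dirDeriv_congr hU hfg _ hp]

theorem gradInnerAlong_lapAlong_left {k : E → ℝ} (hf : ContDiffOn ℝ ∞ f U) :
    gradInnerAlong e (lapAlong e f) k p
      = ∑ j, gradInnerAlong e (dirDeriv (e j) (dirDeriv (e j) f)) k p := by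
  simp only [gradInnerAlong]
  rw [Finset.sum_comm]
  refine Finset.sum_congr rfl fun i _ => ?_
  rw [← Finset.sum_mul]
  congr 1
  exact dirDeriv_sum (fun j _ =>
    ((hf.dirDeriv hU (e j)).dirDeriv hU (e j)).differentiableAt_of_isOpen hU hp) (e i)

theorem lapAlong_gradInnerAlong (hf : ContDiffOn ℝ ∞ f U) (hg : ContDiffOn ℝ ∞ g U) :
    lapAlong e (gradInnerAlong e f g) p
      = gradInnerAlong e (lapAlong e f) g p
        + 2 * ∑ j, gradInnerAlong e (dirDeriv (e j) f) (dirDeriv (e j) g) p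
        + gradInnerAlong e f (lapAlong e g) p := by
  have hstep : ∀ j, dirDeriv (e j) (dirDeriv (e j) (gradInnerAlong e f g)) p
      = gradInnerAlong e (dirDeriv (e j) (dirDeriv (e j) f)) g p
        + 2 * gradInnerAlong e (dirDeriv (e j) f) (dirDeriv (e j) g) p
        + gradInnerAlong e f (dirDeriv (e j) (dirDeriv (e j) g)) p := fun j => by
    have hfj := hf.dirDeriv hU (e j)
    have hgj := hg.dirDeriv hU (e j)
    rw [dirDeriv_congr hU (fun q hq => dirDeriv_gradInnerAlong hU hq hf hg (e j)) (e j) hp,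
      dirDeriv_add ((hfj.gradInnerAlong hg hU).differentiableAt_of_isOpen hU hp)
        ((hf.gradInnerAlong hgj hU).differentiableAt_of_isOpen hU hp),
      dirDeriv_gradInnerAlong hU hp hfj hg, dirDeriv_gradInnerAlong hU hp hf hgj]
    ring
  rw [lapAlong, Finset.sum_congr rfl fun j _ => hstep j, gradInnerAlong_lapAlong_left hU hp hf,
    gradInnerAlong_comm f, gradInnerAlong_lapAlong_left hU hp hg]
  simp only [gradInnerAlong_comm _ f, Finset.sum_add_distrib, Finset.mul_sum]

theorem lapAlong_gradInnerAlong_self (hg : ContDiffOn ℝ ∞ g U) :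
    lapAlong e (gradInnerAlong e g g) p
      = 2 * gradInnerAlong e (lapAlong e g) g p + 2 * hessSqAlong e g p := by
  have hhess :
      ∑ j, gradInnerAlong e (dirDeriv (e j) g) (dirDeriv (e j) g) p = hessSqAlong e g p := by
    simp only [gradInnerAlong, hessSqAlong, sq]
    exact Finset.sum_comm
  rw [lapAlong_gradInnerAlong hU hp hg hg, gradInnerAlong_comm g (lapAlong e g), hhess]
  ring

theorem evolution_two_lapAlong_sub_gradInnerAlong {V h P : E → ℝ} {τ : E} (hV : ContDiffOn ℝ ∞ V U)
    (hh : ContDiffOn ℝ ∞ h U) (hh_const : ∀ i, EqOn (dirDeriv (e i) h) 0 U)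
    (hVτ : EqOn (dirDeriv τ V) (fun q => lapAlong e V q - gradInnerAlong e V V q + h q) U)
    (hP : EqOn P (fun q => 2 * lapAlong e V q - gradInnerAlong e V V q + 4 * h q) U) :
    dirDeriv τ P p = lapAlong e P p - 2 * gradInnerAlong e P V p - 2 * hessSqAlong e V p
      + 4 * dirDeriv τ h p := by
  have hL := hV.lapAlong (e := e) hU
  have hQ := hV.gradInnerAlong (e := e) hV hU
  have d : ∀ {φ : E → ℝ}, ContDiffOn ℝ ∞ φ U → DifferentiableAt ℝ φ p :=
    fun hφ => hφ.differentiableAt_of_isOpen hU hp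
  have hh_grad : gradInnerAlong e h V p = 0 :=
    Finset.sum_eq_zero fun i _ => by simp [hh_const i hp]
  have hτP : dirDeriv τ P p = 2 * lapAlong e (dirDeriv τ V) p
      - 2 * gradInnerAlong e (dirDeriv τ V) V p + 4 * dirDeriv τ h p := by
    rw [dirDeriv_congr hU hP τ hp, dirDeriv_add (d (by fun_prop)) (d (by fun_prop)),
      dirDeriv_sub (d (by fun_prop)) (d hQ), dirDeriv_const_mul (d hL),
      dirDeriv_const_mul (d hh), dirDeriv_lapAlong hU hp hV, dirDeriv_gradInnerAlong hU hp hV hV,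
      gradInnerAlong_comm V (dirDeriv τ V)]
    ring
  have hlapVτ : lapAlong e (dirDeriv τ V) p = lapAlong e (lapAlong e V) p
      - lapAlong e (gradInnerAlong e V V) p := by
    rw [lapAlong_congr hU hp hVτ, lapAlong_add hU hp (by fun_prop) hh, lapAlong_sub hU hp hL hQ,
      lapAlong_eq_zero hU hp hh_const, add_zero]
  have hgradVτ : gradInnerAlong e (dirDeriv τ V) V p = gradInnerAlong e (lapAlong e V) V p
      - gradInnerAlong e (gradInnerAlong e V V) V p := by
    rw [gradInnerAlong_congr_left hU hp hVτ, gradInnerAlong_add_left (d (by fun_prop)) (d hh),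
      gradInnerAlong_sub_left (d hL) (d hQ), hh_grad, add_zero]
  have hlapP : lapAlong e P p = 2 * lapAlong e (lapAlong e V) p
      - lapAlong e (gradInnerAlong e V V) p := by
    rw [lapAlong_congr hU hp hP, lapAlong_add hU hp (by fun_prop) (by fun_prop),
      lapAlong_sub hU hp (by fun_prop) hQ, lapAlong_const_mul hU hp hL,
      lapAlong_const_mul hU hp hh, lapAlong_eq_zero hU hp hh_const, mul_zero, add_zero]
  have hgradP : gradInnerAlong e P V p = 2 * gradInnerAlong e (lapAlong e V) V p
      - gradInnerAlong e (gradInnerAlong e V V) V p := by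
    rw [gradInnerAlong_congr_left hU hp hP,
      gradInnerAlong_add_left (d (by fun_prop)) (d (by fun_prop)),
      gradInnerAlong_sub_left (d (by fun_prop)) (d hQ), gradInnerAlong_const_mul_left (d hL),
      gradInnerAlong_const_mul_left (d hh), hh_grad, mul_zero, add_zero]
  rw [hτP, hlapVτ, hgradVτ, hlapP, hgradP, lapAlong_gradInnerAlong_self hU hp hV]
  ring

end Along

section ProdSpace

variable {F : Type*} [NormedAddCommGroup F] [NormedSpace ℝ F] {u : ℝ → F → ℝ} {t : ℝ} {x : F}

theorem fderiv_apply_eq_dirDeriv_uncurry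
    (hu : DifferentiableAt ℝ (uncurry u) (t, x)) (w : F) :
    fderiv ℝ (u t) x w = dirDeriv (0, w) (uncurry u) (t, x) := by
  have h := hu.hasFDerivAt.comp x (hasFDerivAt_prodMk_right t x)
  rw [show u t = uncurry u ∘ Prod.mk t from rfl, h.fderiv]
  rfl

theorem deriv_eq_dirDeriv_uncurry (hu : DifferentiableAt ℝ (uncurry u) (t, x)) :
    deriv (fun s => u s x) t = dirDeriv (1, 0) (uncurry u) (t, x) := by
  exact (hu.hasFDerivAt.comp t (hasFDerivAt_prodMk_left t x)).hasDerivAt.deriv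

theorem dirDeriv_const_mul_inv_fst {p : ℝ × F} (hp : p.1 ≠ 0) (c : ℝ) (w : ℝ × F) :
    dirDeriv w (fun q => c * q.1⁻¹) p = -(c * w.1 / p.1 ^ 2) := by
  have h := ((hasDerivAt_inv hp).const_mul c).comp_hasFDerivAt p (hasFDerivAt_fst (𝕜 := ℝ) (p := p))
  rw [dirDeriv, show (fun q : ℝ × F => c * q.1⁻¹) = (fun s => c * s⁻¹) ∘ Prod.fst from rfl,
    h.fderiv]
  simp only [smul_apply, ContinuousLinearMap.coe_fst', smul_eq_mul]
  ring

end ProdSpace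

theorem sum_sum_sub_mul_ite_sq {ι : Type*} [Fintype ι] [DecidableEq ι] (M : ι → ι → ℝ) (c : ℝ) :
    ∑ i, ∑ j, (M i j - c * if i = j then 1 else 0) ^ 2
      = ∑ i, ∑ j, M i j ^ 2 - 2 * c * ∑ i, M i i + Fintype.card ι * c ^ 2 := by
  have hrow : ∀ i, ∑ j, (M i j - c * if i = j then 1 else 0) ^ 2
      = ∑ j, M i j ^ 2 - 2 * c * M i i + c ^ 2 := fun i => by
    simp only [sub_sq, mul_ite, mul_one, mul_zero, ite_pow, Finset.sum_add_distrib,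
      Finset.sum_sub_distrib]
    simp only [Finset.sum_ite_eq, Finset.mem_univ, if_true, ne_eq, OfNat.ofNat_ne_zero,
      not_false_eq_true, zero_pow]
    ring
  simp only [hrow, Finset.sum_add_distrib, Finset.sum_sub_distrib, Finset.mul_sum]
  simp

section Coordinates

variable {n : ℕ} {u w : ℝ → (Fin n → ℝ) → ℝ} {t : ℝ} {x : Fin n → ℝ}

def spaceDir (i : Fin n) : ℝ × (Fin n → ℝ) := (0, Pi.single i 1)

theorem pd_eq_dirDeriv (hu : DifferentiableAt ℝ (uncurry u) (t, x)) (i : Fin n) :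
    pd i (u t) x = dirDeriv (spaceDir i) (uncurry u) (t, x) :=
  fderiv_apply_eq_dirDeriv_uncurry hu _

theorem sum_pd_mul_pd_eq_gradInnerAlong (hu : DifferentiableAt ℝ (uncurry u) (t, x))
    (hw : DifferentiableAt ℝ (uncurry w) (t, x)) :
    ∑ i, pd i (u t) x * pd i (w t) x = gradInnerAlong spaceDir (uncurry u) (uncurry w) (t, x) := by
  simp only [gradInnerAlong, pd_eq_dirDeriv hu, pd_eq_dirDeriv hw]

theorem gradSq_eq_gradInnerAlong (hu : DifferentiableAt ℝ (uncurry u) (t, x)) :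
    gradSq (u t) x = gradInnerAlong spaceDir (uncurry u) (uncurry u) (t, x) := by
  simpa only [gradSq, sq] using sum_pd_mul_pd_eq_gradInnerAlong hu hu

variable {U : Set (ℝ × (Fin n → ℝ))} (hU : IsOpen U) (hu : ContDiffOn ℝ ∞ (uncurry u) U)
  (ht : ∀ y, (t, y) ∈ U)
include hU hu ht

theorem pd_pd_eq_dirDeriv (i j : Fin n) :
    pd i (pd j (u t)) x = dirDeriv (spaceDir i) (dirDeriv (spaceDir j) (uncurry u)) (t, x) := by
  have hj : pd j (u t) = fun y => dirDeriv (spaceDir j) (uncurry u) (t, y) :=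
    funext fun y => pd_eq_dirDeriv (hu.differentiableAt_of_isOpen hU (ht y)) j
  rw [hj]
  exact pd_eq_dirDeriv (u := fun s y => dirDeriv (spaceDir j) (uncurry u) (s, y))
    ((hu.dirDeriv hU _).differentiableAt_of_isOpen hU (ht x)) i

theorem lap_eq_lapAlong : lap (u t) x = lapAlong spaceDir (uncurry u) (t, x) :=
  Finset.sum_congr rfl fun i _ => pd_pd_eq_dirDeriv hU hu ht i i

theorem sum_sum_hess_sq_eq_hessSqAlong :
    ∑ i, ∑ j, hess i j (u t) x ^ 2 = hessSqAlong spaceDir (uncurry u) (t, x) := by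
  simp only [hess, pd_pd_eq_dirDeriv hU hu ht, hessSqAlong]

end Coordinates

theorem evolution_two_lap_sub_gradSq {n : ℕ} {v P : ℝ → (Fin n → ℝ) → ℝ} {c : ℝ}
    (hv : ContDiffOn ℝ ∞ (uncurry v) (Ioi 0 ×ˢ univ))
    (heq : ∀ t > 0, ∀ x, deriv (fun s => v s x) t = lap (v t) x - gradSq (v t) x + c / t)
    (hP : ∀ t > 0, ∀ x, P t x = 2 * lap (v t) x - gradSq (v t) x + 4 * c / t)
    {t : ℝ} (ht : 0 < t) (x : Fin n → ℝ) :
    deriv (fun s => P s x) t = lap (P t) x - 2 * ∑ i, pd i (P t) x * pd i (v t) x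
      - 2 * ∑ i, ∑ j, hess i j (v t) x ^ 2 - 4 * c / t ^ 2 := by
  set U : Set (ℝ × (Fin n → ℝ)) := Ioi 0 ×ˢ univ
  have hU : IsOpen U := isOpen_Ioi.prod isOpen_univ
  have hUs : ∀ {s : ℝ}, 0 < s → ∀ y, (s, y) ∈ U := fun hs _ => ⟨hs, trivial⟩
  have hvd : ∀ {s : ℝ}, 0 < s → ∀ y, DifferentiableAt ℝ (uncurry v) (s, y) :=
    fun hs y => hv.differentiableAt_of_isOpen hU (hUs hs y)
  set h : ℝ × (Fin n → ℝ) → ℝ := fun q => c * q.1⁻¹ with h_def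
  have hh : ContDiffOn ℝ ∞ h U := contDiffOn_const.mul (contDiffOn_fst.inv fun q hq => hq.1.ne')
  have hh_const : ∀ i, EqOn (dirDeriv (spaceDir i) h) 0 U := fun i q hq => by
    rw [h_def, dirDeriv_const_mul_inv_fst hq.1.ne']
    simp [spaceDir]
  have hVU : EqOn (dirDeriv (1, 0) (uncurry v)) (fun q => lapAlong spaceDir (uncurry v) q
      - gradInnerAlong spaceDir (uncurry v) (uncurry v) q + h q) U := by
    rintro ⟨s, y⟩ ⟨hs, -⟩
    rw [← deriv_eq_dirDeriv_uncurry (hvd hs y), heq s hs y, lap_eq_lapAlong hU hv (hUs hs),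
      gradSq_eq_gradInnerAlong (hvd hs y), h_def, div_eq_mul_inv]
  have hPU : EqOn (uncurry P) (fun q => 2 * lapAlong spaceDir (uncurry v) q
      - gradInnerAlong spaceDir (uncurry v) (uncurry v) q + 4 * h q) U := by
    rintro ⟨s, y⟩ ⟨hs, -⟩
    rw [Function.uncurry_apply_pair, hP s hs y, lap_eq_lapAlong hU hv (hUs hs),
      gradSq_eq_gradInnerAlong (hvd hs y), h_def, mul_div_assoc, div_eq_mul_inv]
  have hPsmooth : ContDiffOn ℝ ∞ (uncurry P) U :=
    (((contDiffOn_const.mul (hv.lapAlong hU)).sub (hv.gradInnerAlong hv hU)).add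
      (contDiffOn_const.mul hh)).congr hPU
  have hPd := hPsmooth.differentiableAt_of_isOpen hU (hUs ht x)
  rw [deriv_eq_dirDeriv_uncurry hPd, lap_eq_lapAlong hU hPsmooth (hUs ht),
    sum_pd_mul_pd_eq_gradInnerAlong hPd (hvd ht x), sum_sum_hess_sq_eq_hessSqAlong hU hv (hUs ht),
    evolution_two_lapAlong_sub_gradInnerAlong hU (hUs ht x) hv hh hh_const hVU hPU, h_def,
    dirDeriv_const_mul_inv_fst ht.ne']
  ring

theorem evolution_P_general
    (n : ℕ) (v : ℝ → (Fin n → ℝ) → ℝ)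
    (hsmooth : ContDiffOn ℝ (⊤ : ℕ∞) (fun p : ℝ × (Fin n → ℝ) => v p.1 p.2)
      (Set.Ioi 0 ×ˢ Set.univ))
    (heq : ∀ t > (0:ℝ), ∀ x : Fin n → ℝ,
      deriv (fun s => v s x) t = lap (v t) x - gradSq (v t) x - n / (2 * t))
    (P : ℝ → (Fin n → ℝ) → ℝ)
    (hP : ∀ t x, P t x = 2 * lap (v t) x - gradSq (v t) x - 2 * n / t) :
    ∀ t > (0:ℝ), ∀ x : Fin n → ℝ,
      deriv (fun s => P s x) t =
        lap (P t) x - 2 * (∑ i, pd i (P t) x * pd i (v t) x)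
        - 2 * (∑ i, ∑ j, (hess i j (v t) x - (1 / t) * (if i = j then (1:ℝ) else 0)) ^ 2)
        - 2 * P t x / t - 2 * gradSq (v t) x / t := by
  intro t ht x
  have key := evolution_two_lap_sub_gradSq (P := P) (c := -(n / 2 : ℝ)) hsmooth
    (fun s hs y => by rw [heq s hs y]; ring) (fun s _ y => by rw [hP]; ring) ht x
  rw [key, sum_sum_sub_mul_ite_sq, Fintype.card_fin, hP,
    show ∑ i, hess i i (v t) x = lap (v t) x from rfl]
  field_simp
  ring

/-- Corollary 3.2: evolution equation for `P = 2Δv − |∇v|² − 2n/t` when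
`∂v/∂t = Δv − |∇v|² − n/(2t)` on flat space. -/
theorem evolution_P
    (n : ℕ) (hn : 1 ≤ n) (v : ℝ → (Fin n → ℝ) → ℝ)
    (hsmooth : ContDiffOn ℝ (⊤ : ℕ∞) (fun p : ℝ × (Fin n → ℝ) => v p.1 p.2)
      (Set.Ioi 0 ×ˢ Set.univ))
    (heq : ∀ t > (0:ℝ), ∀ x : Fin n → ℝ,
      deriv (fun s => v s x) t = lap (v t) x - gradSq (v t) x - n / (2 * t))
    (P : ℝ → (Fin n → ℝ) → ℝ)
    (hP : ∀ t x, P t x = 2 * lap (v t) x - gradSq (v t) x - 2 * n / t) :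
    ∀ t > (0:ℝ), ∀ x : Fin n → ℝ,
      deriv (fun s => P s x) t =
        lap (P t) x - 2 * (∑ i, pd i (P t) x * pd i (v t) x)
        - 2 * (∑ i, ∑ j, (hess i j (v t) x - (1 / t) * (if i = j then (1:ℝ) else 0)) ^ 2)
        - 2 * P t x / t - 2 * gradSq (v t) x / t :=
  evolution_P_general n v hsmooth heq P hP
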